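/- arXiv:1704.02921 — 5 statements merged into one kernel-verified Lean document; each statement's English description precedes it below -/
import Mathlib

section
/- Octahedral Tucker lemma: Let s and n be positive integers. If there exists a map λ from {+,-,0}^n \ {0} to {±1,...,±s} such that λ(-x) = -λ(x) for all x, and λ(x) + λ(y) ≠ 0 whenever x ⪯ y, then s ≥ n. -/
/-!
Fan's parity argument. Call a maximal flag `x₀ ⪰ x₁ ⪰ ⋯` of nonzero sign vectors alternating if
its labels are distinct and, sorted by absolute value, alternate in sign starting with `+`. For a
Tucker labelling of `{+,-,0}^(m+1)`, count the pairs (flag whose `x₀` has first coordinate `+`,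
step whose removal leaves an alternating facet). A flag has an odd number of such steps iff it is
alternating with either starting sign, and antipodality turns the flags starting with `-` into
those starting with `+` on the opposite hemisphere; so the number of pairs is the number of
alternating flags mod 2. On the other hand, pivoting to the other flag through the same facet
pairs them up, except at the equator, where the pairs are the alternating flags of the labelling
restricted to `x 0 = 0`. So the number of alternating flags is odd in every dimension, and an
alternating flag of `{+,-,0}^n` carries `n` labels of distinct absolute values in `{1, …, s}`.
-/
open Finset

namespace OctahedralTucker

/-- Sorted by absolute value, the elements of `S` alternate in sign, starting with the sign of
`ε`; the position of `a` in that order is the number of elements of smaller absolute value. -/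
def IsAlternating (ε : ℤˣ) (S : Finset ℤ) : Prop :=
  ∀ a ∈ S, 0 < ((ε * (-1) ^ #{b ∈ S | |b| < |a|} : ℤˣ) : ℤ) * a

instance (ε : ℤˣ) : DecidablePred (IsAlternating ε) := fun S ↦ by
  unfold IsAlternating; infer_instance

lemma neg_units_mul_pos_iff {e : ℤˣ} {a : ℤ} (ha : a ≠ 0) :
    0 < ((-e : ℤˣ) : ℤ) * a ↔ ¬ 0 < (e : ℤ) * a := by
  rcases Int.units_eq_one_or e with rfl | rfl <;>
    simp only [Units.val_neg, Units.val_one, neg_neg, neg_mul, one_mul, Int.neg_pos, not_lt] <;>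
    omega

lemma isAlternating_insert {ε : ℤˣ} {S : Finset ℤ} {M : ℤ} (hM : ∀ a ∈ S, |a| < |M|) :
    IsAlternating ε (insert M S) ↔
      IsAlternating ε S ∧ 0 < ((ε * (-1) ^ #S : ℤˣ) : ℤ) * M := by
  have below_M : {b ∈ insert M S | |b| < |M|} = S := by
    rw [filter_insert, if_neg (lt_irrefl _), filter_true_of_mem hM]
  have below_a : ∀ a ∈ S, {b ∈ insert M S | |b| < |a|} = {b ∈ S | |b| < |a|} := fun a ha ↦ by
    rw [filter_insert, if_neg (hM a ha).not_gt]
  simp only [IsAlternating, forall_mem_insert, below_M]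
  rw [and_comm]
  refine and_congr_left' (forall₂_congr fun a ha ↦ ?_)
  rw [below_a a ha]

lemma isAlternating_image_neg {ε : ℤˣ} {S : Finset ℤ} :
    IsAlternating ε (S.image Neg.neg) ↔ IsAlternating (-ε) S := by
  have below : ∀ a, #{b ∈ S.image Neg.neg | |b| < |-a|} = #{b ∈ S | |b| < |a|} := fun a ↦ by
    rw [filter_image, card_image_of_injective _ neg_injective]
    simp only [abs_neg]
  simp only [IsAlternating, forall_mem_image, below]
  refine forall₂_congr fun a _ ↦ ?_
  simp only [Units.val_mul, Units.val_neg, mul_neg, neg_mul]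

/-- Induct on `S`, removing the element `M` of largest absolute value. A facet `S.erase a` with
`a ≠ M` still has `M` on top, which must then carry the sign opposite to the one it needs in `S`,
the facet being one element shorter. -/
theorem natCast_card_filter_isAlternating_erase (ε : ℤˣ) (S : Finset ℤ)
    (hS : ∀ a ∈ S, ∀ b ∈ S, a + b ≠ 0) :
    (#{a ∈ S | IsAlternating ε (S.erase a)} : ZMod 2) =
      (if IsAlternating ε S then 1 else 0) + (if IsAlternating (-ε) S then 1 else 0) := by
  induction S using Finset.induction_on_max_value (f := fun a : ℤ ↦ |a|) with
  | empty =>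
    have alt_empty : ∀ ε', IsAlternating ε' ∅ := fun _ a ha ↦ absurd ha (notMem_empty a)
    rw [filter_empty, card_empty, if_pos (alt_empty ε), if_pos (alt_empty (-ε))]
    decide
  | insert M S hMS hle ih =>
    have hM : ∀ a ∈ S, |a| < |M| := fun a ha ↦ (hle a ha).lt_of_ne fun h ↦ by
      rcases abs_eq_abs.1 h with rfl | rfl
      · exact hMS ha
      · exact hS _ (mem_insert_of_mem ha) _ (mem_insert_self _ _) (neg_add_cancel M)
    have hM0 : M ≠ 0 := fun h ↦ hS M (mem_insert_self _ _) M (mem_insert_self _ _) (by simp [h])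
    set pos := 0 < ((ε * (-1) ^ #S : ℤˣ) : ℤ) * M
    have alt_pos : IsAlternating ε (insert M S) ↔ IsAlternating ε S ∧ pos :=
      isAlternating_insert hM
    have alt_neg : IsAlternating (-ε) (insert M S) ↔ IsAlternating (-ε) S ∧ ¬pos := by
      rw [isAlternating_insert hM, neg_mul, neg_units_mul_pos_iff hM0]
    have alt_erase : ∀ a ∈ S,
        IsAlternating ε ((insert M S).erase a) ↔ IsAlternating ε (S.erase a) ∧ ¬pos := by
      intro a ha
      rw [erase_insert_of_ne (ne_of_apply_ne abs (hM a ha).ne'),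
        isAlternating_insert fun b hb ↦ hM b (mem_of_mem_erase hb), ← neg_units_mul_pos_iff hM0,
        ← card_erase_add_one ha, pow_succ, mul_neg_one, mul_neg, neg_neg]
    have count : #{a ∈ insert M S | IsAlternating ε ((insert M S).erase a)} =
        (if IsAlternating ε S then 1 else 0) +
          (if pos then 0 else #{a ∈ S | IsAlternating ε (S.erase a)}) := by
      rw [filter_insert, erase_insert hMS, filter_congr alt_erase]
      by_cases hpos : pos <;> by_cases halt : IsAlternating ε S <;>
        simp [hpos, halt, hMS, add_comm]
    have hS' : ∀ a ∈ S, ∀ b ∈ S, a + b ≠ 0 := fun a ha b hb ↦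
      hS a (mem_insert_of_mem ha) b (mem_insert_of_mem hb)
    simp only [count, alt_pos, alt_neg, Nat.cast_add, Nat.cast_ite, Nat.cast_one, Nat.cast_zero]
    by_cases hpos : pos
    · simp only [hpos, not_true, and_false, and_true, if_true, if_false, add_zero]
    · simp only [hpos, not_false_eq_true, and_true, and_false, if_false, ih hS']
      split_ifs <;> decide

section Families

variable {ι : Type*}

lemma image_erase_of_injOn {β : Type*} [DecidableEq ι] [DecidableEq β] {f : ι → β}
    {s : Finset ι} {j : ι} (hf : Set.InjOn f s) (hj : j ∈ s) :
    (s.erase j).image f = (s.image f).erase (f j) := by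
  refine (eq_of_subset_of_card_le (erase_image_subset_image_erase f s j) ?_).symm
  rw [card_image_of_injOn (hf.mono (erase_subset j s)), card_erase_of_mem hj,
    card_erase_of_mem (mem_image_of_mem f hj), card_image_of_injOn hf]

def IsAlternatingOn (ε : ℤˣ) (v : ι → ℤ) (s : Finset ι) : Prop :=
  #(s.image v) = #s ∧ IsAlternating ε (s.image v)

instance (ε : ℤˣ) (v : ι → ℤ) : DecidablePred (IsAlternatingOn ε v) := fun s ↦ by
  unfold IsAlternatingOn; infer_instance

lemma isAlternatingOn_congr {κ : Type*} {ε : ℤˣ} {v : ι → ℤ} {w : κ → ℤ}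
    {s : Finset ι} {t : Finset κ} (h : s.image v = t.image w) (hst : #s = #t) :
    IsAlternatingOn ε v s ↔ IsAlternatingOn ε w t := by
  rw [IsAlternatingOn, IsAlternatingOn, h, hst]

lemma isAlternatingOn_neg {ε : ℤˣ} {v : ι → ℤ} {s : Finset ι} :
    IsAlternatingOn ε (-v) s ↔ IsAlternatingOn (-ε) v s := by
  have h : s.image (-v) = (s.image v).image Neg.neg := by rw [image_image]; rfl
  rw [IsAlternatingOn, IsAlternatingOn, h, isAlternating_image_neg,
    card_image_of_injective _ neg_injective]

/-- When `v` repeats a value at `a ≠ b`, only `s.erase a` and `s.erase b` can be alternating, and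
they carry the same labels. -/
theorem natCast_card_filter_isAlternatingOn_erase [DecidableEq ι] (ε : ℤˣ) (v : ι → ℤ)
    (s : Finset ι) (hv : ∀ i ∈ s, ∀ j ∈ s, v i + v j ≠ 0) :
    (#{j ∈ s | IsAlternatingOn ε v (s.erase j)} : ZMod 2) =
      (if IsAlternatingOn ε v s then 1 else 0) + (if IsAlternatingOn (-ε) v s then 1 else 0) := by
  by_cases hinj : Set.InjOn v s
  · have hcard : #(s.image v) = #s := card_image_of_injOn hinj
    have facet : ∀ j ∈ s,
        IsAlternatingOn ε v (s.erase j) ↔ IsAlternating ε ((s.image v).erase (v j)) := by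
      intro j hj
      rw [IsAlternatingOn, card_image_of_injOn (hinj.mono (erase_subset j s)),
        image_erase_of_injOn hinj hj, eq_self, true_and]
    rw [filter_congr facet, ← card_image_of_injOn (hinj.mono (filter_subset _ s)),
      ← filter_image (p := fun a ↦ IsAlternating ε ((s.image v).erase a))]
    simp only [IsAlternatingOn, hcard, true_and]
    exact natCast_card_filter_isAlternating_erase ε _ (by simpa only [forall_mem_image] using hv)
  · obtain ⟨a, ha, b, hb, hab, hne⟩ : ∃ a ∈ s, ∃ b ∈ s, v a = v b ∧ a ≠ b := by
      simpa [Set.InjOn] using hinj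
    have not_alt : ∀ {t : Finset ι} (ε' : ℤˣ), a ∈ t → b ∈ t → ¬ IsAlternatingOn ε' v t :=
      fun _ hat hbt h ↦ hne (card_image_iff.1 h.1 hat hbt hab)
    have image_erase : ∀ {c d : ι}, d ∈ s → c ≠ d → v c = v d →
        (s.erase c).image v = s.image v := by
      intro c d hd hcd hvcd
      refine (image_subset_image (erase_subset c s)).antisymm fun x hx ↦ ?_
      obtain ⟨i, hi, rfl⟩ := mem_image.1 hx
      by_cases hic : i = c
      · exact mem_image.2 ⟨d, mem_erase.2 ⟨hcd.symm, hd⟩, by rw [hic, hvcd]⟩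
      · exact mem_image_of_mem v (mem_erase.2 ⟨hic, hi⟩)
    have same : IsAlternatingOn ε v (s.erase a) ↔ IsAlternatingOn ε v (s.erase b) :=
      isAlternatingOn_congr ((image_erase hb hne hab).trans (image_erase ha hne.symm hab.symm).symm)
        (by rw [card_erase_of_mem ha, card_erase_of_mem hb])
    have only_ab : {j ∈ s | IsAlternatingOn ε v (s.erase j)} =
        {j ∈ ({a, b} : Finset ι) | IsAlternatingOn ε v (s.erase j)} := by
      ext j
      simp only [mem_filter, mem_insert, mem_singleton]
      constructor
      · rintro ⟨-, halt⟩
        refine ⟨?_, halt⟩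
        by_contra! h
        exact not_alt ε (mem_erase.2 ⟨h.1.symm, ha⟩) (mem_erase.2 ⟨h.2.symm, hb⟩) halt
      · rintro ⟨rfl | rfl, halt⟩ <;> exact ⟨‹_›, halt⟩
    rw [only_ab, if_neg (not_alt ε ha hb), if_neg (not_alt (-ε) ha hb), filter_insert,
      filter_singleton]
    by_cases h : IsAlternatingOn ε v (s.erase a)
    · simp only [h, same.1 h, if_true, card_pair hne]
      decide
    · simp only [h, same.not.1 h, if_false, card_empty, Nat.cast_zero, add_zero]

end Families

lemma card_le_of_forall_abs_le {S : Finset ℤ} {N : ℕ} (hS : ∀ a ∈ S, ∀ b ∈ S, a + b ≠ 0)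
    (hN : ∀ a ∈ S, |a| ≤ N) : #S ≤ N := by
  have hinj : Set.InjOn Int.natAbs S := fun a ha b hb hab ↦ by
    rcases Int.natAbs_eq_natAbs_iff.1 hab with h | h
    · exact h
    · exact absurd (by rw [h, neg_add_cancel]) (hS a ha b hb)
  have hmaps : ∀ a ∈ S, a.natAbs ∈ Icc 1 N := fun a ha ↦ by
    have h0 : a ≠ 0 := fun h ↦ hS a ha a ha (by rw [h, add_zero])
    have := hN a ha
    rw [Int.abs_eq_natAbs] at this
    exact mem_Icc.2 ⟨Int.natAbs_pos.2 h0, by exact_mod_cast this⟩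
  calc #S = #(S.image Int.natAbs) := (card_image_of_injOn hinj).symm
    _ ≤ #(Icc 1 N) := card_le_card (image_subset_iff.2 hmaps)
    _ = N := Nat.card_Icc 1 N

lemma even_card_of_involution {α : Type*} {s : Finset α} (g : α → α) (hg : ∀ a ∈ s, g a ∈ s)
    (hgg : ∀ a ∈ s, g (g a) = a) (hne : ∀ a ∈ s, g a ≠ a) : Even #s := by
  rw [← ZMod.natCast_eq_zero_iff_even, card_eq_sum_ones, Nat.cast_sum]
  exact sum_involution (fun a _ ↦ g a) (fun _ _ ↦ by decide) (fun a ha _ ↦ hne a ha) hg hgg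

structure IsTuckerLabeling {n : ℕ} (lam : (Fin n → SignType) → ℤ) : Prop where
  map_neg : ∀ x : Fin n → SignType, x ≠ 0 → lam (-x) = -lam x
  add_ne_zero : ∀ x y : Fin n → SignType, x ≠ 0 →
    (∀ i, x i ≠ 0 → x i = y i) → lam x + lam y ≠ 0

def faceLabeling {m : ℕ} (lam : (Fin (m + 1) → SignType) → ℤ) : (Fin m → SignType) → ℤ :=
  fun x ↦ lam (Fin.cons 0 x)

lemma IsTuckerLabeling.face {m : ℕ} {lam : (Fin (m + 1) → SignType) → ℤ}
    (h : IsTuckerLabeling lam) : IsTuckerLabeling (faceLabeling lam) := by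
  have cons_ne_zero : ∀ x : Fin m → SignType, x ≠ 0 →
      (Fin.cons 0 x : Fin (m + 1) → SignType) ≠ 0 :=
    fun x hx h0 ↦ hx (funext fun i ↦ by simpa using congrFun h0 i.succ)
  refine ⟨fun x hx ↦ ?_, fun x y hx hxy ↦ h.add_ne_zero _ _ (cons_ne_zero x hx) fun i ↦ ?_⟩
  · have : (Fin.cons 0 (-x) : Fin (m + 1) → SignType) = -Fin.cons 0 x := by
      ext i; cases i using Fin.cases <;> simp
    rw [faceLabeling, faceLabeling, this, h.map_neg _ (cons_ne_zero x hx)]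
  · cases i using Fin.cases
    · simp
    · simpa using hxy _

/-- A maximal flag `F.vec 0 ⪰ F.vec 1 ⪰ ⋯` of nonzero sign vectors in `{+,-,0}^m`: coordinate `i`
is nonzero in `F.vec j` exactly for `j ≤ F.1 i`, with sign given by `F.2 i`. -/
abbrev Flag (m : ℕ) := Equiv.Perm (Fin m) × (Fin m → Bool)

namespace Flag

variable {m : ℕ}

def vec (F : Flag m) (j : Fin m) : Fin m → SignType :=
  fun i ↦ if j ≤ F.1 i then (if F.2 i then 1 else -1) else 0

def labels (F : Flag m) (lam : (Fin m → SignType) → ℤ) (j : Fin m) : ℤ :=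
  lam (F.vec j)

def neg (F : Flag m) : Flag m :=
  (F.1, fun i ↦ !F.2 i)

lemma vec_ne_zero (F : Flag m) (j : Fin m) : F.vec j ≠ 0 := fun h ↦ by
  have := congrFun h (F.1.symm j)
  simp only [vec, Equiv.apply_symm_apply, le_refl, if_true, Pi.zero_apply] at this
  split_ifs at this

lemma vec_le (F : Flag m) {j k : Fin m} (hjk : j ≤ k) (i : Fin m) (hk : F.vec k i ≠ 0) :
    F.vec k i = F.vec j i := by
  by_cases hki : k ≤ F.1 i
  · simp only [vec, hki, hjk.trans hki, if_true]
  · simp [vec, hki] at hk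

lemma vec_neg (F : Flag m) (j : Fin m) : F.neg.vec j = -F.vec j := by
  ext i
  by_cases hj : j ≤ F.1 i <;> cases h : F.2 i <;> simp [vec, neg, hj, h]

lemma labels_add_ne_zero {lam : (Fin m → SignType) → ℤ} (h : IsTuckerLabeling lam) (F : Flag m)
    (j k : Fin m) : F.labels lam j + F.labels lam k ≠ 0 := by
  rcases le_total j k with hjk | hjk
  · rw [add_comm]
    exact h.add_ne_zero _ _ (F.vec_ne_zero k) (F.vec_le hjk)
  · exact h.add_ne_zero _ _ (F.vec_ne_zero j) (F.vec_le hjk)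

lemma labels_neg {lam : (Fin m → SignType) → ℤ} (h : IsTuckerLabeling lam) (F : Flag m) :
    F.neg.labels lam = -F.labels lam :=
  funext fun j ↦ by rw [labels, vec_neg, h.map_neg _ (F.vec_ne_zero j)]; rfl

lemma neg_neg (F : Flag m) : F.neg.neg = F := by
  simp [neg]

lemma vec_swap (F : Flag (m + 1)) (i : Fin m) {k : Fin (m + 1)} (hk : k ≠ i.succ) :
    vec (Equiv.swap i.castSucc i.succ * F.1, F.2) k = F.vec k := by
  have hk' : (k : ℕ) ≠ i + 1 := fun h ↦ hk (Fin.ext (by simpa using h))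
  have key : ∀ t, k ≤ Equiv.swap i.castSucc i.succ t ↔ k ≤ t := fun t ↦ by
    rcases eq_or_ne t i.castSucc with rfl | h1
    · simp only [Equiv.swap_apply_left, Fin.le_def, Fin.val_succ, Fin.val_castSucc]
      omega
    rcases eq_or_ne t i.succ with rfl | h2
    · simp only [Equiv.swap_apply_right, Fin.le_def, Fin.val_succ, Fin.val_castSucc]
      omega
    rw [Equiv.swap_apply_of_ne_of_ne h1 h2]
  ext c
  simp only [vec, Equiv.Perm.mul_apply, key]

lemma vec_update (F : Flag (m + 1)) (b : Bool) {k : Fin (m + 1)} (hk : k ≠ 0) :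
    vec (F.1, Function.update F.2 (F.1.symm 0) b) k = F.vec k := by
  ext c
  by_cases hc : c = F.1.symm 0
  · subst hc
    simp [vec, hk]
  · simp only [vec, Function.update_of_ne hc]

/-- The other flag through the facet of `p.1` without `p.1.vec p.2`: the steps `p.2 - 1` and `p.2`
are exchanged, or, for `p.2 = 0`, the sign of the coordinate vanishing first is flipped. -/
def pivot : Flag (m + 1) × Fin (m + 1) → Flag (m + 1) × Fin (m + 1)
  | (F, j) => Fin.cases ((F.1, Function.update F.2 (F.1.symm 0) (!F.2 (F.1.symm 0))), 0)
      (fun i ↦ ((Equiv.swap i.castSucc i.succ * F.1, F.2), i.succ)) j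

lemma pivot_pivot (p : Flag (m + 1) × Fin (m + 1)) : pivot (pivot p) = p := by
  obtain ⟨F, j⟩ := p
  cases j using Fin.cases <;> simp [pivot, Equiv.swap_mul_self_mul]

lemma pivot_ne (p : Flag (m + 1) × Fin (m + 1)) : pivot p ≠ p := by
  obtain ⟨F, j⟩ := p
  cases j using Fin.cases with
  | zero =>
    intro h
    have := congrFun (congrArg (fun p ↦ p.1.2) h) (F.1.symm 0)
    simp [pivot] at this
  | succ i =>
    intro h
    have := congrArg (fun p ↦ p.1.1) h
    simp only [pivot, Fin.cases_succ, mul_eq_right, Equiv.swap_eq_one_iff] at this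
    exact Fin.castSucc_lt_succ.ne this

def lift (F : Flag m) : Flag (m + 1) :=
  (Equiv.Perm.decomposeFin.symm (0, F.1), Fin.cons true F.2)

lemma lift_vec_succ (F : Flag m) (k : Fin m) : F.lift.vec k.succ = Fin.cons 0 (F.vec k) := by
  ext c
  cases c using Fin.cases <;> simp [lift, vec, Fin.succ_le_succ_iff]

end Flag

def alternatingFlagCount {m : ℕ} (lam : (Fin m → SignType) → ℤ) : ℕ :=
  #{F : Flag m | IsAlternatingOn 1 (F.labels lam) univ}

section Step

variable {m : ℕ} {lam : (Fin (m + 1) → SignType) → ℤ}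

/-- `p.1.2 0 = true` places the flag in the hemisphere where the first coordinate of `p.1.vec 0`
is `+`. -/
def doors (lam : (Fin (m + 1) → SignType) → ℤ) : Finset (Flag (m + 1) × Fin (m + 1)) :=
  {p | p.1.2 0 = true ∧ IsAlternatingOn 1 (p.1.labels lam) (univ.erase p.2)}

lemma natCast_card_doors (h : IsTuckerLabeling lam) :
    (#(doors lam) : ZMod 2) = alternatingFlagCount lam := by
  let alt (ε : ℤˣ) (F : Flag (m + 1)) : Prop := IsAlternatingOn ε (F.labels lam) univ
  have neg_bij : #{F | alt (-1) F ∧ F.2 0 = true} = #{F | alt 1 F ∧ ¬F.2 0 = true} :=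
    card_equiv (Function.Involutive.toPerm _ Flag.neg_neg) fun F ↦ by
      rw [mem_filter_univ, mem_filter_univ]
      change _ ↔ alt 1 F.neg ∧ ¬F.neg.2 0 = true
      simp only [alt, Flag.labels_neg h, isAlternatingOn_neg]
      simp [Flag.neg]
  calc (#(doors lam) : ZMod 2)
      = ∑ F : Flag (m + 1), if F.2 0 = true then
          (#{j | IsAlternatingOn 1 (F.labels lam) (univ.erase j)} : ZMod 2) else 0 := by
        rw [doors, natCast_card_filter, Fintype.sum_prod_type]
        refine sum_congr rfl fun F _ ↦ ?_
        split_ifs with h0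
        · simp only [h0, true_and, natCast_card_filter]
        · simp [h0]
    _ = ∑ F : Flag (m + 1), if F.2 0 = true then
          (if alt 1 F then 1 else 0) + (if alt (-1) F then 1 else 0) else 0 := by
        refine sum_congr rfl fun F _ ↦ ?_
        rw [natCast_card_filter_isAlternatingOn_erase _ _ _
          fun i _ j _ ↦ F.labels_add_ne_zero h i j]
    _ = #{F | alt 1 F ∧ F.2 0 = true} + #{F | alt (-1) F ∧ F.2 0 = true} := by
        rw [natCast_card_filter, natCast_card_filter, ← sum_add_distrib]
        refine sum_congr rfl fun F _ ↦ ?_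
        split_ifs <;> simp_all
    _ = alternatingFlagCount lam := by
        rw [neg_bij, ← Nat.cast_add, ← filter_filter, ← filter_filter,
          card_filter_add_card_filter_not]
        rfl

lemma even_card_interior_doors :
    Even #{p ∈ doors lam | ¬(p.2 = 0 ∧ p.1.1 0 = 0)} := by
  refine even_card_of_involution Flag.pivot ?_ (fun p _ ↦ Flag.pivot_pivot p)
    fun p _ ↦ Flag.pivot_ne p
  rintro ⟨F, j⟩ hp
  simp only [doors, mem_filter, mem_univ, true_and] at hp ⊢
  obtain ⟨⟨hemi, door⟩, interior⟩ := hp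
  cases j using Fin.cases with
  | zero =>
    have hσ : F.1 0 ≠ 0 := by simpa using interior
    have hc : F.1.symm 0 ≠ 0 := fun hc ↦ hσ ((Equiv.symm_apply_eq _).1 hc).symm
    simp only [Flag.pivot, Fin.cases_zero]
    refine ⟨⟨by rwa [Function.update_of_ne hc.symm], ?_⟩, by simpa using hσ⟩
    refine (isAlternatingOn_congr (image_congr fun k hk ↦ ?_) rfl).1 door
    exact congrArg lam (F.vec_update _ (ne_of_mem_erase hk)).symm
  | succ i =>
    simp only [Flag.pivot, Fin.cases_succ]
    refine ⟨⟨hemi, ?_⟩, by simp⟩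
    refine (isAlternatingOn_congr (image_congr fun k hk ↦ ?_) rfl).1 door
    exact congrArg lam (F.vec_swap i (ne_of_mem_erase hk)).symm

lemma card_boundary_doors :
    #{p ∈ doors lam | p.2 = 0 ∧ p.1.1 0 = 0} = alternatingFlagCount (faceLabeling lam) := by
  have door_lift : ∀ F : Flag m, IsAlternatingOn 1 (F.lift.labels lam) (univ.erase 0) ↔
      IsAlternatingOn 1 (F.labels (faceLabeling lam)) univ := fun F ↦ by
    refine isAlternatingOn_congr ?_ (by simp)
    rw [← compl_singleton, ← Fin.image_succ_univ, image_image]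
    exact image_congr fun k _ ↦ congrArg lam (F.lift_vec_succ k)
  have lift_restrict : ∀ p ∈ {p ∈ doors lam | p.2 = 0 ∧ p.1.1 0 = 0},
      (Flag.lift ((Equiv.Perm.decomposeFin p.1.1).2, Fin.tail p.1.2), 0) = p := by
    rintro ⟨⟨σ, ρ⟩, j⟩ hp
    simp only [doors, mem_filter, mem_univ, true_and] at hp
    obtain ⟨⟨hemi, -⟩, rfl, hσ⟩ := hp
    have hfst : (Equiv.Perm.decomposeFin σ).1 = 0 := by
      have := Equiv.Perm.decomposeFin_symm_apply_zero (Equiv.Perm.decomposeFin σ).1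
        (Equiv.Perm.decomposeFin σ).2
      rw [Prod.mk.eta, Equiv.symm_apply_apply] at this
      rw [← this, hσ]
    have hσ' : Equiv.Perm.decomposeFin.symm (0, (Equiv.Perm.decomposeFin σ).2) = σ := by
      rw [← hfst, Prod.mk.eta, Equiv.symm_apply_apply]
    have hρ : Fin.cons true (Fin.tail ρ) = ρ := by
      rw [← hemi, Fin.cons_self_tail]
    simp only [Flag.lift, hσ', hρ]
  symm
  refine card_nbij' (fun F ↦ (F.lift, 0))
    (fun p ↦ ((Equiv.Perm.decomposeFin p.1.1).2, Fin.tail p.1.2))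
    (fun F hF ↦ ?_) (fun p hp ↦ ?_) (fun F _ ↦ ?_) lift_restrict
  · simp only [mem_coe, mem_filter, mem_univ, true_and] at hF
    simp only [mem_coe, doors, mem_filter, mem_univ, true_and, door_lift, hF, and_true]
    simp [Flag.lift]
  · simp only [mem_coe, mem_filter, mem_univ, true_and]
    have hlift : Flag.lift ((Equiv.Perm.decomposeFin p.1.1).2, Fin.tail p.1.2) = p.1 :=
      congrArg Prod.fst (lift_restrict p hp)
    rw [← door_lift, hlift]
    simp only [mem_coe, doors, mem_filter, mem_univ, true_and] at hp
    obtain ⟨⟨-, door⟩, hj, -⟩ := hp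
    rwa [hj] at door
  · simp [Flag.lift]

theorem IsTuckerLabeling.alternatingFlagCount_face (h : IsTuckerLabeling lam) :
    (alternatingFlagCount lam : ZMod 2) = alternatingFlagCount (faceLabeling lam) := by
  rw [← natCast_card_doors h, ← card_filter_add_card_filter_not (fun p ↦ p.2 = 0 ∧ p.1.1 0 = 0),
    card_boundary_doors, Nat.cast_add, ZMod.natCast_eq_zero_iff_even.2 even_card_interior_doors,
    add_zero]

end Step

theorem IsTuckerLabeling.odd_alternatingFlagCount {n : ℕ} {lam : (Fin n → SignType) → ℤ}
    (h : IsTuckerLabeling lam) : Odd (alternatingFlagCount lam) := by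
  induction n with
  | zero => simp [alternatingFlagCount, IsAlternatingOn, IsAlternating]
  | succ m ih =>
    rw [← ZMod.natCast_eq_one_iff_odd, h.alternatingFlagCount_face, ZMod.natCast_eq_one_iff_odd]
    exact ih h.face

end OctahedralTucker

open OctahedralTucker

theorem octahedral_tucker_general (s n : ℕ)
    (lam : (Fin n → SignType) → ℤ)
    (hrange : ∀ x : Fin n → SignType, x ≠ 0 → 1 ≤ |lam x| ∧ |lam x| ≤ (s : ℤ))
    (hodd : ∀ x : Fin n → SignType, x ≠ 0 → lam (-x) = -lam x)
    (hcomp : ∀ x y : Fin n → SignType, x ≠ 0 →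
      (∀ i, x i ≠ 0 → x i = y i) → lam x + lam y ≠ 0) :
    n ≤ s := by
  have h : IsTuckerLabeling lam := ⟨hodd, hcomp⟩
  obtain ⟨F, -, hdistinct, -⟩ :=
    filter_nonempty_iff.1 (card_pos.1 h.odd_alternatingFlagCount.pos)
  calc n = #(univ.image (F.labels lam)) := by rw [hdistinct, card_univ, Fintype.card_fin]
    _ ≤ s := card_le_of_forall_abs_le
      (forall_mem_image.2 fun i _ ↦ forall_mem_image.2 fun j _ ↦ F.labels_add_ne_zero h i j)
      (forall_mem_image.2 fun j _ ↦ (hrange _ (F.vec_ne_zero j)).2)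

/-- Octahedral Tucker lemma. Sign vectors are modeled as `Fin n → SignType`;
`x ⪯ y` means every nonzero coordinate of `x` agrees with `y`. -/
theorem octahedral_tucker (s n : ℕ) (hs : 0 < s) (hn : 0 < n)
    (lam : (Fin n → SignType) → ℤ)
    (hrange : ∀ x : Fin n → SignType, x ≠ 0 → 1 ≤ |lam x| ∧ |lam x| ≤ (s : ℤ))
    (hodd : ∀ x : Fin n → SignType, x ≠ 0 → lam (-x) = -lam x)
    (hcomp : ∀ x y : Fin n → SignType, x ≠ 0 →
      (∀ i, x i ≠ 0 → x i = y i) → lam x + lam y ≠ 0) :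
    n ≤ s :=
  octahedral_tucker_general s n lam hrange hodd hcomp
end

section
/- Fix a positive integer q. Suppose that whenever a path whose vertex set is partitioned into m classes of size at least q'-1 admits pairwise disjoint q'-stable sets S_1,...,S_{q'} covering all vertices but q'-1 in each class with |S_i ∩ V_j| ≥ ⌊(|V_j|+1)/q'⌋ - 1 and sizes between ⌊(n-(q'-1)m)/q'⌋ and ⌈(n-(q'-1)m)/q'⌉ — and the same holds for q'' — then the same conclusion holds for q = q'·q'': every path whose vertex set is partitioned into m subsets V_1,...,V_m of sizes at least q-1 admits pairwise disjoint q-stable sets S_1,...,S_q covering all vertices but q-1 in each V_j, with |S_i ∩ V_j| ≥ ⌊(|V_j|+1)/q⌋ - 1 for all i, j, and with all |S_i| between ⌊(n-(q-1)m)/q⌋ and ⌈(n-(q-1)m)/q⌉. -/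
/-- A set of vertices of the path on `1,...,n` is `q`-stable if any two of its
elements are at distance at least `q`. -/
def QStable (q : ℕ) (S : Finset ℕ) : Prop :=
  ∀ a ∈ S, ∀ b ∈ S, a ≠ b → q ≤ Nat.dist a b

/-- The conclusion of the conjecture for the parameter `q`: every path on
`1,...,n` whose vertex set is partitioned into classes of size at least `q-1`
admits pairwise disjoint `q`-stable sets `S 0, ..., S (q-1)` covering all
vertices but `q-1` in each class, with `|S i ∩ V j| ≥ ⌊(|V j|+1)/q⌋ - 1` and
`⌊(n-(q-1)m)/q⌋ ≤ |S i| ≤ ⌈(n-(q-1)m)/q⌉`. -/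
def SplitConj (q : ℕ) : Prop :=
  ∀ (n m : ℕ) (V : Fin m → Finset ℕ),
    Finset.univ.biUnion V = Finset.Icc 1 n →
    (∀ j k : Fin m, j ≠ k → Disjoint (V j) (V k)) →
    (∀ j, q - 1 ≤ (V j).card) →
    ∃ S : Fin q → Finset ℕ,
      (∀ i, S i ⊆ Finset.Icc 1 n) ∧
      (∀ i k : Fin q, i ≠ k → Disjoint (S i) (S k)) ∧
      (∀ i, QStable q (S i)) ∧
      (∀ j, ∑ i, (S i ∩ V j).card = (V j).card - (q - 1)) ∧
      (∀ i j, ((V j).card + 1) / q - 1 ≤ (S i ∩ V j).card) ∧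
      (∀ i, (n - (q - 1) * m) / q ≤ (S i).card ∧
        (S i).card ≤ (n - (q - 1) * m + (q - 1)) / q)

namespace SplitMulAux

/-- 1-based rank of `a` inside the finset `T`. -/
def rk (T : Finset ℕ) (a : ℕ) : ℕ := (T.filter (· ≤ a)).card

lemma rk_pos {T : Finset ℕ} {a : ℕ} (ha : a ∈ T) : 1 ≤ rk T a :=
  Finset.card_pos.mpr ⟨a, Finset.mem_filter.mpr ⟨ha, le_refl a⟩⟩

lemma rk_le {T : Finset ℕ} (a : ℕ) : rk T a ≤ T.card := Finset.card_filter_le _ _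

lemma rk_mem_Icc {T : Finset ℕ} {a : ℕ} (ha : a ∈ T) :
    rk T a ∈ Finset.Icc 1 T.card :=
  Finset.mem_Icc.mpr ⟨rk_pos ha, rk_le a⟩

lemma rk_lt_rk {T : Finset ℕ} {a b : ℕ} (hb : b ∈ T) (hab : a < b) :
    rk T a < rk T b := by
  apply Finset.card_lt_card
  rw [Finset.ssubset_def]
  constructor
  · intro x hx
    rw [Finset.mem_filter] at hx ⊢
    exact ⟨hx.1, le_trans hx.2 (le_of_lt hab)⟩
  · intro hsub
    have := hsub (Finset.mem_filter.mpr ⟨hb, le_refl b⟩)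
    have := (Finset.mem_filter.mp this).2
    omega

lemma rk_injOn {T : Finset ℕ} : Set.InjOn (rk T) ↑T := by
  intro a ha b hb h
  rcases lt_trichotomy a b with h' | h' | h'
  · exact absurd h (Nat.ne_of_lt (rk_lt_rk hb h'))
  · exact h'
  · exact absurd h.symm (Nat.ne_of_lt (rk_lt_rk ha h'))

lemma image_rk (T : Finset ℕ) : T.image (rk T) = Finset.Icc 1 T.card := by
  apply Finset.eq_of_subset_of_card_le
  · intro x hx
    obtain ⟨a, ha, rfl⟩ := Finset.mem_image.mp hx
    exact rk_mem_Icc ha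
  · rw [Finset.card_image_of_injOn rk_injOn, Nat.card_Icc]
    omega

lemma gap {q : ℕ} {T : Finset ℕ} (hT : QStable q T) :
    ∀ d a b, a ∈ T → b ∈ T → a < b → b - a = d → q * (rk T b - rk T a) ≤ b - a := by
  intro d
  induction d using Nat.strong_induction_on with
  | _ d ih =>
    intro a b ha hb hab hd
    by_cases hc : ∃ c ∈ T, a < c ∧ c < b
    · obtain ⟨c, hcT, hac, hcb⟩ := hc
      have h1 := ih (c - a) (by omega) a c ha hcT hac rfl
      have h2 := ih (b - c) (by omega) c b hcT hb hcb rfl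
      have m1 : rk T a < rk T c := rk_lt_rk hcT hac
      have m2 : rk T c < rk T b := rk_lt_rk hb hcb
      have hsplit : q * (rk T b - rk T a)
          = q * (rk T b - rk T c) + q * (rk T c - rk T a) := by
        rw [← Nat.mul_add]
        congr 1
        omega
      omega
    · push_neg at hc
      have hfil : T.filter (· ≤ b) = insert b (T.filter (· ≤ a)) := by
        ext x
        simp only [Finset.mem_filter, Finset.mem_insert]
        constructor
        · rintro ⟨hx, hxb⟩
          rcases eq_or_lt_of_le hxb with h | h
          · exact Or.inl h
          · refine Or.inr ⟨hx, ?_⟩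
            by_contra hxa
            push_neg at hxa
            have := hc x hx hxa
            omega
        · rintro (rfl | ⟨hx, hxa⟩)
          · exact ⟨hb, le_refl _⟩
          · exact ⟨hx, by omega⟩
      have hbnot : b ∉ T.filter (· ≤ a) := by
        simp only [Finset.mem_filter]
        push_neg
        intro _
        omega
      have hrk : rk T b = rk T a + 1 := by
        simp only [rk]
        rw [hfil, Finset.card_insert_of_notMem hbnot]
      have hdist := hT a ha b hb (by omega)
      rw [Nat.dist_eq_sub_of_le (le_of_lt hab)] at hdist
      have h1 : rk T b - rk T a = 1 := by omega
      rw [h1, Nat.mul_one]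
      exact hdist

lemma card_filter_eq {T X : Finset ℕ} (hX : X ⊆ Finset.Icc 1 T.card) :
    (T.filter (fun a => rk T a ∈ X)).card = X.card := by
  apply Finset.card_bij (fun a _ => rk T a)
  · intro a ha
    exact (Finset.mem_filter.mp ha).2
  · intro a ha b hb h
    exact rk_injOn (Finset.mem_coe.mpr (Finset.mem_filter.mp ha).1)
      (Finset.mem_coe.mpr (Finset.mem_filter.mp hb).1) h
  · intro x hx
    have hx' : x ∈ T.image (rk T) := by rw [image_rk]; exact hX hx
    obtain ⟨a, ha, rfl⟩ := Finset.mem_image.mp hx'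
    exact ⟨a, Finset.mem_filter.mpr ⟨ha, hx⟩, rfl⟩

lemma card_filter_inter {T U X : Finset ℕ} :
    ((T.filter (fun a => rk T a ∈ X)) ∩ U).card
      = (X ∩ (T ∩ U).image (rk T)).card := by
  apply Finset.card_bij (fun a _ => rk T a)
  · intro a ha
    obtain ⟨ha1, ha2⟩ := Finset.mem_inter.mp ha
    obtain ⟨haT, haX⟩ := Finset.mem_filter.mp ha1
    exact Finset.mem_inter.mpr ⟨haX,
      Finset.mem_image.mpr ⟨a, Finset.mem_inter.mpr ⟨haT, ha2⟩, rfl⟩⟩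
  · intro a ha b hb h
    have haT := (Finset.mem_filter.mp (Finset.mem_inter.mp ha).1).1
    have hbT := (Finset.mem_filter.mp (Finset.mem_inter.mp hb).1).1
    exact rk_injOn (Finset.mem_coe.mpr haT) (Finset.mem_coe.mpr hbT) h
  · intro x hx
    obtain ⟨hxX, hxim⟩ := Finset.mem_inter.mp hx
    obtain ⟨a, ha, rfl⟩ := Finset.mem_image.mp hxim
    obtain ⟨haT, haU⟩ := Finset.mem_inter.mp ha
    exact ⟨a, Finset.mem_inter.mpr ⟨Finset.mem_filter.mpr ⟨haT, hxX⟩, haU⟩, rfl⟩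

lemma arith1 {q' q'' : ℕ} (h1 : 0 < q') (h2 : 0 < q'') :
    (q' - 1) + q' * (q'' - 1) = q' * q'' - 1 := by
  obtain ⟨a, rfl⟩ := Nat.exists_eq_add_of_le h1
  obtain ⟨b, rfl⟩ := Nat.exists_eq_add_of_le h2
  have e1 : (1 + a) * (1 + b) = 1 + a + b + a * b := by ring
  have e2 : (1 + a) * (1 + b - 1) = b + a * b := by
    have : 1 + b - 1 = b := by omega
    rw [this]; ring
  rw [e1, e2]
  generalize a * b = c
  omega

lemma div_lower (A c q' q'' : ℕ) (h' : 0 < q') :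
    (A - q' * c) / (q' * q'') ≤ (A / q' - c) / q'' := by
  rcases le_or_gt (q' * c) A with h | h
  · obtain ⟨B, rfl⟩ : ∃ B, A = B + q' * c := ⟨A - q' * c, (Nat.sub_add_cancel h).symm⟩
    rw [Nat.add_sub_cancel, Nat.add_mul_div_left _ _ h', Nat.add_sub_cancel,
      ← Nat.div_div_eq_div_mul]
  · rw [Nat.sub_eq_zero_of_le (le_of_lt h), Nat.zero_div]
    exact Nat.zero_le _

lemma div_upper (A c q' q'' : ℕ) (h' : 0 < q') (h'' : 0 < q'') :
    ((A + (q' - 1)) / q' - c + (q'' - 1)) / q''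
      ≤ (A - q' * c + (q' * q'' - 1)) / (q' * q'') := by
  rcases le_or_gt (q' * c) A with h | h
  · obtain ⟨B, rfl⟩ : ∃ B, A = B + q' * c := ⟨A - q' * c, (Nat.sub_add_cancel h).symm⟩
    have e1 : B + q' * c - q' * c = B := by rw [Nat.add_sub_cancel]
    have e2 : (B + q' * c + (q' - 1)) / q' = (B + (q' - 1)) / q' + c := by
      rw [show B + q' * c + (q' - 1) = B + (q' - 1) + q' * c by ring,
        Nat.add_mul_div_left _ _ h']
    have e4 : (B + (q' * q'' - 1)) / (q' * q'')
        = ((B + (q' - 1)) / q' + (q'' - 1)) / q'' := by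
      rw [← Nat.div_div_eq_div_mul, ← arith1 h' h'', ← Nat.add_assoc,
        Nat.add_mul_div_left _ _ h']
    rw [e1, e2, Nat.add_sub_cancel, e4]
  · have hA0 : A - q' * c = 0 := Nat.sub_eq_zero_of_le (le_of_lt h)
    have hle : (A + (q' - 1)) / q' ≤ c := by
      have hlt : (A + (q' - 1)) / q' < c + 1 := by
        rw [Nat.div_lt_iff_lt_mul h']
        have key : (c + 1) * q' = q' * c + q' := by ring
        rw [key]
        generalize q' * c = d at h ⊢
        omega
      omega
    have hnum : (A + (q' - 1)) / q' - c + (q'' - 1) < q'' := by omega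
    rw [hA0, Nat.div_eq_of_lt hnum]
    exact Nat.zero_le _

end SplitMulAux

open SplitMulAux in
/-- Multiplicativity: if the conjecture holds for `q'` and `q''`, it holds for
`q' * q''`. -/
theorem splitConj_mul (q' q'' : ℕ) (hq' : 0 < q') (hq'' : 0 < q'')
    (h1 : SplitConj q') (h2 : SplitConj q'') : SplitConj (q' * q'') := by
  classical
  intro n m V hcover hdisj hcard
  -- Step 1: apply the conjecture for q'
  obtain ⟨S', hsub', hdisj', hstab', hcov', hlow', hsize'⟩ :=
    h1 n m V hcover hdisj (fun j =>
      le_trans (Nat.sub_le_sub_right (Nat.le_mul_of_pos_right q' hq'') 1) (hcard j))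
  -- induced classes on each S' i, via the rank map
  set W : Fin q' → Fin m → Finset ℕ :=
    fun i j => (S' i ∩ V j).image (rk (S' i)) with hWdef
  have hWcard : ∀ i j, (W i j).card = (S' i ∩ V j).card := by
    intro i j
    exact Finset.card_image_of_injOn
      (rk_injOn.mono (Finset.coe_subset.mpr Finset.inter_subset_left))
  have hbiU : ∀ i, Finset.univ.biUnion (W i) = Finset.Icc 1 (S' i).card := by
    intro i
    have h0 : Finset.univ.biUnion (fun j => S' i ∩ V j) = S' i := by
      ext x
      simp only [Finset.mem_biUnion, Finset.mem_inter, Finset.mem_univ, true_and]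
      constructor
      · rintro ⟨j, hx, _⟩; exact hx
      · intro hx
        have hx' : x ∈ Finset.univ.biUnion V := by rw [hcover]; exact hsub' i hx
        obtain ⟨j, _, hj⟩ := Finset.mem_biUnion.mp hx'
        exact ⟨j, hx, hj⟩
    calc Finset.univ.biUnion (W i)
        = (Finset.univ.biUnion fun j => S' i ∩ V j).image (rk (S' i)) :=
          Finset.biUnion_image.symm
      _ = (S' i).image (rk (S' i)) := by rw [h0]
      _ = Finset.Icc 1 (S' i).card := image_rk _
  have hWdisj : ∀ i, ∀ j k : Fin m, j ≠ k → Disjoint (W i j) (W i k) := by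
    intro i j k hjk
    rw [Finset.disjoint_left]
    intro x hxj hxk
    obtain ⟨a, ha, hax⟩ := Finset.mem_image.mp hxj
    obtain ⟨b, hb, hbx⟩ := Finset.mem_image.mp hxk
    obtain ⟨haS, haV⟩ := Finset.mem_inter.mp ha
    obtain ⟨hbS, hbV⟩ := Finset.mem_inter.mp hb
    have hab : a = b := rk_injOn (Finset.mem_coe.mpr haS) (Finset.mem_coe.mpr hbS)
      (hax.trans hbx.symm)
    exact Finset.disjoint_left.mp (hdisj j k hjk) haV (hab ▸ hbV)
  have hWlow : ∀ i j, q'' - 1 ≤ (W i j).card := by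
    intro i j
    rw [hWcard]
    have h2' : q'' ≤ ((V j).card + 1) / q' := by
      rw [Nat.le_div_iff_mul_le hq']
      calc q'' * q' = q' * q'' := Nat.mul_comm _ _
        _ ≤ (V j).card + 1 := Nat.sub_le_iff_le_add.mp (hcard j)
    exact le_trans (Nat.sub_le_sub_right h2' 1) (hlow' i j)
  -- Step 2: apply the conjecture for q'' inside each S' i
  have H := fun i : Fin q' => h2 (S' i).card m (W i) (hbiU i) (hWdisj i) (hWlow i)
  choose S'' hsub'' hdisj'' hstab'' hcov'' hlow'' hsize'' using H
  -- the final sets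
  set F : Fin q' × Fin q'' → Finset ℕ :=
    fun p => (S' p.1).filter (fun a => rk (S' p.1) a ∈ S'' p.1 p.2) with hFdef
  have hFinter : ∀ (p : Fin q' × Fin q'') (j : Fin m),
      (F p ∩ V j).card = (S'' p.1 p.2 ∩ W p.1 j).card := by
    intro p j
    exact card_filter_inter
  have hFcard : ∀ p : Fin q' × Fin q'', (F p).card = (S'' p.1 p.2).card := by
    intro p
    exact card_filter_eq (hsub'' p.1 p.2)
  refine ⟨fun x => F (finProdFinEquiv.symm x), ?_, ?_, ?_, ?_, ?_, ?_⟩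
  · intro x
    exact (Finset.filter_subset _ _).trans (hsub' _)
  · intro i k hik
    have hpr : finProdFinEquiv.symm i ≠ finProdFinEquiv.symm k :=
      finProdFinEquiv.symm.injective.ne hik
    set p := finProdFinEquiv.symm i with hp
    set r := finProdFinEquiv.symm k with hr
    rw [Finset.disjoint_left]
    intro a hai hak
    simp only [F, Finset.mem_filter] at hai hak
    by_cases h1 : p.1 = r.1
    · have h2' : p.2 ≠ r.2 := fun h => hpr (Prod.ext h1 h)
      rw [← h1] at hak
      exact Finset.disjoint_left.mp (hdisj'' p.1 p.2 r.2 h2') hai.2 hak.2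
    · exact Finset.disjoint_left.mp (hdisj' p.1 r.1 h1) hai.1 hak.1
  · intro i
    set p := finProdFinEquiv.symm i with hp
    intro a ha b hb hab
    simp only [F, Finset.mem_filter] at ha hb
    have key : ∀ x y : ℕ, x ∈ S' p.1 → y ∈ S' p.1 →
        rk (S' p.1) x ∈ S'' p.1 p.2 → rk (S' p.1) y ∈ S'' p.1 p.2 →
        x < y → q' * q'' ≤ y - x := by
      intro x y hx hy hx2 hy2 hxy
      have hgap := gap (hstab' p.1) (y - x) x y hx hy hxy rfl
      have hrklt : rk (S' p.1) x < rk (S' p.1) y := rk_lt_rk hy hxy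
      have hst := hstab'' p.1 p.2 _ hx2 _ hy2 (Nat.ne_of_lt hrklt)
      rw [Nat.dist_eq_sub_of_le (le_of_lt hrklt)] at hst
      calc q' * q'' ≤ q' * (rk (S' p.1) y - rk (S' p.1) x) :=
            Nat.mul_le_mul_left _ hst
        _ ≤ y - x := hgap
    rcases lt_or_gt_of_ne hab with h | h
    · rw [Nat.dist_eq_sub_of_le (le_of_lt h)]
      exact key a b ha.1 hb.1 ha.2 hb.2 h
    · rw [Nat.dist_comm, Nat.dist_eq_sub_of_le (le_of_lt h)]
      exact key b a hb.1 ha.1 hb.2 ha.2 h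
  · intro j
    have hsum : ∑ i : Fin (q' * q''), (F (finProdFinEquiv.symm i) ∩ V j).card
        = ∑ p : Fin q' × Fin q'', (F p ∩ V j).card :=
      Equiv.sum_comp finProdFinEquiv.symm (fun p => (F p ∩ V j).card)
    calc ∑ i : Fin (q' * q''), (F (finProdFinEquiv.symm i) ∩ V j).card
        = ∑ p : Fin q' × Fin q'', (F p ∩ V j).card := hsum
      _ = ∑ i : Fin q', ∑ k : Fin q'', (F (i, k) ∩ V j).card :=
          Fintype.sum_prod_type _
      _ = ∑ i : Fin q', ((W i j).card - (q'' - 1)) := by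
          apply Finset.sum_congr rfl
          intro i _
          rw [Finset.sum_congr rfl (fun k _ => hFinter (i, k) j)]
          exact hcov'' i j
      _ = (∑ i : Fin q', (W i j).card) - q' * (q'' - 1) := by
          rw [Finset.sum_tsub_distrib _ (fun i _ => hWlow i j),
            Finset.sum_const, Finset.card_univ, Fintype.card_fin, smul_eq_mul]
      _ = ((V j).card - (q' - 1)) - q' * (q'' - 1) := by
          congr 1
          rw [Finset.sum_congr rfl (fun i _ => hWcard i j)]
          exact hcov' j
      _ = (V j).card - (q' * q'' - 1) := by
          rw [Nat.sub_sub, arith1 hq' hq'']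
  · intro i j
    set p := finProdFinEquiv.symm i with hp
    rw [hFinter p j]
    refine le_trans ?_ (hlow'' p.1 p.2 j)
    apply Nat.sub_le_sub_right
    rw [← Nat.div_div_eq_div_mul]
    apply Nat.div_le_div_right
    rw [hWcard]
    exact Nat.sub_le_iff_le_add.mp (hlow' p.1 j)
  · intro i
    set p := finProdFinEquiv.symm i with hp
    rw [hFcard p]
    set A := n - (q' - 1) * m with hA
    set c := (q'' - 1) * m with hc
    obtain ⟨hlo2, hhi2⟩ := hsize'' p.1 p.2
    obtain ⟨hlo1, hhi1⟩ := hsize' p.1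
    have hBkey : n - (q' * q'' - 1) * m = A - q' * c := by
      have hdist : (q' * q'' - 1) * m = (q' - 1) * m + q' * ((q'' - 1) * m) := by
        rw [← Nat.mul_assoc, ← Nat.add_mul, arith1 hq' hq'']
      rw [hdist, ← Nat.sub_sub]
    constructor
    · rw [hBkey]
      calc (A - q' * c) / (q' * q'') ≤ (A / q' - c) / q'' :=
            div_lower A c q' q'' hq'
        _ ≤ ((S' p.1).card - c) / q'' :=
            Nat.div_le_div_right (Nat.sub_le_sub_right hlo1 c)
        _ ≤ (S'' p.1 p.2).card := hlo2
    · rw [hBkey]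
      calc (S'' p.1 p.2).card ≤ ((S' p.1).card - c + (q'' - 1)) / q'' := hhi2
        _ ≤ ((A + (q' - 1)) / q' - c + (q'' - 1)) / q'' :=
            Nat.div_le_div_right (Nat.add_le_add_right (Nat.sub_le_sub_right hhi1 c) _)
        _ ≤ (A - q' * c + (q' * q'' - 1)) / (q' * q'') :=
            div_upper A c q' q'' hq' hq''
end

section
/- Let H = (V, E) be a bipartite graph and b : V → ℤ_{≥0}. Then H has a b-factor if and only if for every subset X ⊆ V, the number of edges of H with both endpoints in X is at least Σ_{v∈X} b(v) - (1/2)·Σ_{v∈V} b(v). -/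
/-!
Necessity is double counting: if `F` is a `b`-factor then `|F| = ∑_A bA = ∑_B bB`, and the edges
of `F` at `XA` together with those at `XB` number `∑_{XA} bA + ∑_{XB} bB ≤ |F| + |E(XA, XB)|`.

Sufficiency goes through Hall's theorem. Put on the left `bA a` copies of each `a` and a node `e⁻`
for each edge, on the right `bB b` copies of each `b` and a node `e⁺` for each edge; join each
copy of `a` to the `e⁺` with `e` at `a`, and `e⁻` to `e⁺` and to the copies of the endpoint of
`e` in `B`. For a matching of the left side, the edges `e` whose `e⁺` is taken by a copy of a
vertex of `A` form a set `F` with `deg_F a = bA a`; each such `e⁻` must then use a copy of its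
endpoint, so `deg_F b ≤ bB b`, with equality since the totals agree. Hall's condition for the
gadget is the deficiency inequality `∑_{XA} bA ≤ |E(XA, B ∖ XB)| + ∑_{XB} bB`, which is the
hypothesis applied to `XA` and `B ∖ XB`.
-/

open Finset Function

section Fibres

variable {ι κ : Type*} [DecidableEq κ] {s : Finset ι} {f : ι → κ} {d : κ → ℕ}

lemma card_filter_mem_eq_sum_of_fiber (h : ∀ k, #{i ∈ s | f i = k} = d k) (X : Finset κ) :
    #{i ∈ s | f i ∈ X} = ∑ k ∈ X, d k := by
  rw [← sum_card_fiberwise_eq_card_filter]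
  exact sum_congr rfl fun k _ => h k

lemma card_eq_sum_of_fiber [Fintype κ] (h : ∀ k, #{i ∈ s | f i = k} = d k) :
    #s = ∑ k, d k := by
  simpa using card_filter_mem_eq_sum_of_fiber h univ

end Fibres

lemma card_filter_sigma_fst_mem {A : Type*} [Fintype A] [DecidableEq A] (n : A → ℕ)
    (X : Finset A) : #{p : Σ a, Fin (n a) | p.1 ∈ X} = ∑ a ∈ X, n a := by
  rw [show ({p : Σ a, Fin (n a) | p.1 ∈ X} : Finset _) = X.sigma fun _ => univ by ext; simp]
  simp

lemma card_filter_univ_val {α : Type*} (E : Finset α) (P : α → Prop) [DecidablePred P] :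
    #{e : E | P e.1} = #{e ∈ E | P e} := by
  rw [univ_eq_attach, filter_attach, card_map, card_attach]

theorem sum_add_sum_le_card_filter_add_card {A B : Type*} [DecidableEq A] [DecidableEq B]
    {E F : Finset (A × B)} {bA : A → ℕ} {bB : B → ℕ} (hFE : F ⊆ E)
    (hA : ∀ a, #{e ∈ F | e.1 = a} = bA a) (hB : ∀ b, #{e ∈ F | e.2 = b} = bB b)
    (XA : Finset A) (XB : Finset B) :
    ∑ a ∈ XA, bA a + ∑ b ∈ XB, bB b ≤ #{e ∈ E | e.1 ∈ XA ∧ e.2 ∈ XB} + #F := by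
  calc ∑ a ∈ XA, bA a + ∑ b ∈ XB, bB b
      = #{e ∈ F | e.1 ∈ XA} + #{e ∈ F | e.2 ∈ XB} := by
        rw [card_filter_mem_eq_sum_of_fiber hA, card_filter_mem_eq_sum_of_fiber hB]
    _ = #({e ∈ F | e.1 ∈ XA} ∪ {e ∈ F | e.2 ∈ XB})
          + #{e ∈ F | e.1 ∈ XA ∧ e.2 ∈ XB} := by
        rw [← card_union_add_card_inter, filter_and]
    _ ≤ #F + #{e ∈ E | e.1 ∈ XA ∧ e.2 ∈ XB} :=
        add_le_add (card_le_card (union_subset (filter_subset _ _) (filter_subset _ _)))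
          (card_le_card (filter_subset_filter _ hFE))
    _ = _ := add_comm _ _

section Gadget

variable {A B Ed : Type*} [Fintype A] [Fintype B] [DecidableEq A] [DecidableEq B]
  (src : Ed → A) (tgt : Ed → B) (bA : A → ℕ) (bB : B → ℕ)

/-- `Sum.inl` are the vertex copies, `Sum.inr e` the nodes `e⁻` (left) and `e⁺` (right). -/
def bFactorGadget : (Σ a, Fin (bA a)) ⊕ Ed → (Σ b, Fin (bB b)) ⊕ Ed → Prop
  | .inl p, .inr e => src e = p.1
  | .inl _, .inl _ => False
  | .inr e, .inr e' => e = e'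
  | .inr e, .inl q => q.1 = tgt e

theorem exists_injective_bFactorGadget [Fintype Ed]
    (hdef : ∀ (XA : Finset A) (XB : Finset B),
      ∑ a ∈ XA, bA a ≤ #{e | src e ∈ XA ∧ tgt e ∉ XB} + ∑ b ∈ XB, bB b) :
    ∃ f, Injective f ∧ ∀ x, bFactorGadget src tgt bA bB x (f x) := by
  classical
  refine (Fintype.all_card_le_filter_rel_iff_exists_injective _).1 fun s => ?_
  set TA := s.toLeft.image Sigma.fst
  set XB := s.toRight.image tgt
  set D : Finset Ed := {e | src e ∈ TA ∧ tgt e ∉ XB}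
  have hD : Disjoint D s.toRight := disjoint_left.2 fun e he hs =>
    (mem_filter.1 he).2.2 (mem_image_of_mem tgt hs)
  have hcopies : #s.toLeft ≤ ∑ a ∈ TA, bA a := by
    rw [← card_filter_sigma_fst_mem]
    exact card_le_card fun p hp => mem_filter.2 ⟨mem_univ p, mem_image_of_mem _ hp⟩
  set C : Finset (Σ b, Fin (bB b)) := {q | q.1 ∈ XB}
  have hN : (D ∪ s.toRight).map .inr ∪ C.map .inl
      ⊆ ({y | ∃ x ∈ s, bFactorGadget src tgt bA bB x y} : Finset _) := by
    intro y hy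
    simp only [C, D, TA, XB, mem_union, mem_map, mem_filter, mem_image, mem_univ, true_and,
      Embedding.inr_apply, Embedding.inl_apply] at hy ⊢
    rcases hy with ⟨e, (⟨⟨p, hp, hpe⟩, -⟩ | he), rfl⟩ | ⟨q, ⟨e, he, hq⟩, rfl⟩
    · exact ⟨.inl p, mem_toLeft.1 hp, hpe.symm⟩
    · exact ⟨.inr e, mem_toRight.1 he, rfl⟩
    · exact ⟨.inr e, mem_toRight.1 he, hq.symm⟩
  calc #s = #s.toLeft + #s.toRight := card_toLeft_add_card_toRight.symm
    _ ≤ #D + ∑ b ∈ XB, bB b + #s.toRight := by gcongr; exact hcopies.trans (hdef TA XB)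
    _ = #((D ∪ s.toRight).map .inr ∪ C.map .inl) := by
      rw [card_union_of_disjoint (disjoint_map_inl_map_inr _ _).symm, card_map, card_map,
        card_union_of_disjoint hD, card_filter_sigma_fst_mem]
      ring
    _ ≤ _ := card_le_card hN

theorem exists_bFactor_of_injective_bFactorGadget {f} (hf : Injective f)
    (hadj : ∀ x, bFactorGadget src tgt bA bB x (f x)) :
    ∃ S : Finset Ed,
      (∀ a, #{e ∈ S | src e = a} = bA a) ∧ ∀ b, #{e ∈ S | tgt e = b} ≤ bB b := by
  classical
  have hcopy : ∀ p, ∃ e, f (.inl p) = .inr e ∧ src e = p.1 := by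
    intro p
    have hp := hadj (.inl p)
    cases h : f (.inl p) with
    | inl q => simp [h, bFactorGadget] at hp
    | inr e => exact ⟨e, rfl, by simpa [h, bFactorGadget] using hp⟩
  choose g hfg hsrc using hcopy
  have hg : Injective g := fun p p' h => Sum.inl_injective (hf (by rw [hfg, hfg, h]))
  refine ⟨univ.image g, fun a => ?_, fun b => ?_⟩
  · rw [filter_image, card_image_of_injective _ hg]
    simpa [hsrc] using card_filter_sigma_fst_mem bA {a}
  · -- `e⁺` is taken by a copy of `src e`, so `e⁻` must be matched to a copy of `tgt e`
    have hmaps : ∀ e ∈ {e ∈ univ.image g | tgt e = b},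
        f (.inr e) ∈ ({q | q.1 = b} : Finset _).map .inl := by
      simp only [mem_filter, mem_image, mem_univ, true_and, and_imp, forall_exists_index]
      rintro _ p rfl rfl
      have hp := hadj (.inr (g p))
      cases h : f (.inr (g p)) with
      | inl q => simpa [h, bFactorGadget] using hp
      | inr e =>
        rw [h, bFactorGadget] at hp
        subst hp
        exact absurd (hf (h.trans (hfg p).symm)) Sum.inr_ne_inl
    calc #{e ∈ univ.image g | tgt e = b}
        ≤ #(({q | q.1 = b} : Finset _).map .inl) :=
          card_le_card_of_injOn (f ∘ .inr) (fun e he => hmaps e he)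
            (hf.comp Sum.inr_injective).injOn
      _ = bB b := by simpa using card_filter_sigma_fst_mem bB {b}

theorem exists_bFactor_of_deficiency [Fintype Ed] (hT : ∑ a, bA a = ∑ b, bB b)
    (hdef : ∀ (XA : Finset A) (XB : Finset B),
      ∑ a ∈ XA, bA a ≤ #{e | src e ∈ XA ∧ tgt e ∉ XB} + ∑ b ∈ XB, bB b) :
    ∃ S : Finset Ed,
      (∀ a, #{e ∈ S | src e = a} = bA a) ∧ ∀ b, #{e ∈ S | tgt e = b} = bB b := by
  obtain ⟨f, hf, hadj⟩ := exists_injective_bFactorGadget src tgt bA bB hdef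
  obtain ⟨S, hA, hB⟩ := exists_bFactor_of_injective_bFactorGadget src tgt bA bB hf hadj
  refine ⟨S, hA, fun b => ?_⟩
  have hsum : ∑ b, #{e ∈ S | tgt e = b} = ∑ b, bB b := by
    rw [← card_eq_sum_of_fiber (fun _ => rfl), ← hT, card_eq_sum_of_fiber hA]
  exact (sum_eq_sum_iff_of_le fun b _ => hB b).1 hsum b (mem_univ b)

end Gadget

theorem exists_subset_bFactor_of_deficiency {A B : Type*} [Fintype A] [Fintype B]
    [DecidableEq A] [DecidableEq B] {E : Finset (A × B)} {bA : A → ℕ} {bB : B → ℕ}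
    (hT : ∑ a, bA a = ∑ b, bB b)
    (hdef : ∀ (XA : Finset A) (XB : Finset B),
      ∑ a ∈ XA, bA a ≤ #{e ∈ E | e.1 ∈ XA ∧ e.2 ∉ XB} + ∑ b ∈ XB, bB b) :
    ∃ F ⊆ E, (∀ a, #{e ∈ F | e.1 = a} = bA a) ∧ ∀ b, #{e ∈ F | e.2 = b} = bB b := by
  obtain ⟨S, hA, hB⟩ :=
    exists_bFactor_of_deficiency (fun e : E => e.1.1) (fun e => e.1.2) bA bB hT fun XA XB => by
      simpa only [card_filter_univ_val E (fun e => e.1 ∈ XA ∧ e.2 ∉ XB)] using hdef XA XB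
  refine ⟨S.map (Embedding.subtype _), fun e he => ?_, fun a => ?_, fun b => ?_⟩
  · obtain ⟨e, -, rfl⟩ := mem_map.1 he
    exact e.2
  · rw [filter_map, card_map]
    exact hA a
  · rw [filter_map, card_map]
    exact hB b

/-- Existence of a `b`-factor in a bipartite graph (Schrijver, Corollary 21.4a).
The bipartite graph has parts `A`, `B` and edge set `E ⊆ A × B`; a `b`-factor
is a set of edges `F ⊆ E` such that every vertex `v` is incident to exactly
`b v` edges of `F`. It exists iff every subset `X` of vertices spans at least
`∑_{v ∈ X} b v - (1/2) ∑_{v} b v` edges. -/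
theorem bFactor_iff {A B : Type} [Fintype A] [Fintype B] [DecidableEq A] [DecidableEq B]
    (E : Finset (A × B)) (bA : A → ℕ) (bB : B → ℕ) :
    (∃ F ⊆ E, (∀ a : A, (F.filter (fun e => e.1 = a)).card = bA a) ∧
              (∀ b : B, (F.filter (fun e => e.2 = b)).card = bB b)) ↔
    (∀ (XA : Finset A) (XB : Finset B),
      ((∑ a ∈ XA, (bA a : ℚ)) + ∑ b ∈ XB, (bB b : ℚ)) -
          ((∑ a : A, (bA a : ℚ)) + ∑ b : B, (bB b : ℚ)) / 2 ≤
        ((E.filter (fun e => e.1 ∈ XA ∧ e.2 ∈ XB)).card : ℚ)) := by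
  constructor
  · rintro ⟨F, hFE, hA, hB⟩ XA XB
    have hle : ((∑ a ∈ XA, bA a + ∑ b ∈ XB, bB b : ℕ) : ℚ)
        ≤ (#{e ∈ E | e.1 ∈ XA ∧ e.2 ∈ XB} + #F : ℕ) := by
      exact_mod_cast sum_add_sum_le_card_filter_add_card hFE hA hB XA XB
    have hFA : (#F : ℚ) = ∑ a, (bA a : ℚ) := by exact_mod_cast card_eq_sum_of_fiber hA
    have hFB : (#F : ℚ) = ∑ b, (bB b : ℚ) := by exact_mod_cast card_eq_sum_of_fiber hB
    push_cast at hle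
    linarith
  · intro h
    have hT : ∑ a, (bA a : ℚ) = ∑ b, (bB b : ℚ) := by
      have h1 := h univ ∅
      have h2 := h ∅ univ
      simp only [sum_empty, add_zero, zero_add, mem_univ, notMem_empty, and_false, and_true,
        filter_false, card_empty, Nat.cast_zero] at h1 h2
      linarith
    have hdef : ∀ (XA : Finset A) (XB : Finset B),
        ∑ a ∈ XA, bA a ≤ #{e ∈ E | e.1 ∈ XA ∧ e.2 ∉ XB} + ∑ b ∈ XB, bB b := by
      intro XA XB
      have hX := h XA XBᶜ
      have hXB := sum_compl_add_sum XB (fun b => (bB b : ℚ))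
      simp only [mem_compl] at hX
      exact_mod_cast (by linarith : (∑ a ∈ XA, (bA a : ℚ))
        ≤ #{e ∈ E | e.1 ∈ XA ∧ e.2 ∉ XB} + ∑ b ∈ XB, (bB b : ℚ))
    exact exists_subset_bFactor_of_deficiency (by exact_mod_cast hT) hdef
end

section
/- Let G be a bipartite graph without cycles (a forest), with parts T₀ (thieves) and B (beads), where every bead-vertex has degree at least 2 and every thief t has degree at least α_t + 1 for given nonnegative integers α_t with Σ_t α_t + 1 = |B|. Fix a distinguished thief t₀. Then there exists a subset F of edges such that every bead-vertex is incident to exactly one edge of F, thief t₀ is incident to exactly α_{t₀} + 1 edges of F, and every other thief t is incident to exactly α_t edges of F. -/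
/-- The simple graph on `T ⊕ B` associated with a bipartite edge set
`E ⊆ T × B`. -/
def biGraph {T B : Type} (E : Finset (T × B)) : SimpleGraph (T ⊕ B) where
  Adj u v := ∃ t b, (t, b) ∈ E ∧
    ((u = Sum.inl t ∧ v = Sum.inr b) ∨ (v = Sum.inl t ∧ u = Sum.inr b))
  symm := by
    constructor
    rintro u v ⟨t, b, h, hc⟩
    exact ⟨t, b, h, hc.symm⟩
  loopless := by
    constructor
    rintro u ⟨t, b, h, (⟨h1, h2⟩ | ⟨h1, h2⟩)⟩ <;> simp_all

/-!
Counting edges makes everything tight. The thieves alone carry at least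
`∑ (α t + 1) = |T| + |B| - 1` edges, while a forest on `|T| + |B|` vertices has at most that
many; so the graph is a tree and every thief has degree exactly `α t + 1`. Root the tree at
`t₀` and give every bead to its parent: each bead has exactly one parent, `t₀` keeps all of its
neighbours as children, and every other thief loses exactly one neighbour, its own parent.
-/

open Finset SimpleGraph

namespace SimpleGraph

variable {V : Type*} {G : SimpleGraph V}

theorem IsAcyclic.exists_isTree_le [Nonempty V] (hG : G.IsAcyclic) :
    ∃ T, G ≤ T ∧ T.IsTree := by
  obtain ⟨T, hGT, hT⟩ := exists_maximal_isAcyclic_of_le_isAcyclic (G := ⊤) le_top hG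
  exact ⟨T, hGT, (connected_top.maximal_le_isAcyclic_iff_isTree le_top).mp hT⟩

theorem IsAcyclic.card_edgeFinset_add_one_le [Fintype V] [Nonempty V] [Fintype G.edgeSet]
    (hG : G.IsAcyclic) : #G.edgeFinset + 1 ≤ Fintype.card V := by
  classical
  obtain ⟨T, hGT, hT⟩ := hG.exists_isTree_le
  rw [← hT.card_edgeFinset]
  gcongr

theorem IsAcyclic.isTree_of_card_le [Fintype V] [Nonempty V] [Fintype G.edgeSet]
    (hG : G.IsAcyclic) (hcard : Fintype.card V ≤ #G.edgeFinset + 1) : G.IsTree := by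
  classical
  obtain ⟨T, hGT, hT⟩ := hG.exists_isTree_le
  have hsub : G.edgeFinset ⊆ T.edgeFinset := edgeFinset_subset_edgeFinset.2 hGT
  have hTcard := hT.card_edgeFinset
  rwa [edgeFinset_inj.1 (eq_of_subset_of_card_le hsub (by omega))]

theorem IsAcyclic.mem_support_of_adj_of_dist_lt (hG : G.IsAcyclic) {r u v : V} {q : G.Walk r v}
    (hq : q.IsPath) (hadj : G.Adj u v) (hlt : G.dist r u < G.dist r v) : u ∈ q.support := by
  classical
  obtain ⟨p, hp, hplen⟩ := (q.reachable.trans hadj.symm.reachable).exists_path_of_dist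
  refine hG.mem_support_of_ne_mem_support_of_adj_of_isPath hq hp hadj.symm fun hv ↦ ?_
  have := (dist_le (p.takeUntil v hv)).trans (p.length_takeUntil_le_length hv)
  omega

theorem IsTree.existsUnique_adj_dist_lt (hG : G.IsTree) {r v : V} (hv : v ≠ r) :
    ∃! u, G.Adj v u ∧ G.dist r u < G.dist r v := by
  obtain ⟨q, hq, hqlen⟩ := (hG.connected r v).exists_path_of_dist
  have hq_nil : ¬ q.Nil := Walk.not_nil_of_ne hv.symm
  refine ⟨q.penultimate, ⟨(q.adj_penultimate hq_nil).symm, ?_⟩, fun u ⟨hadj, hlt⟩ ↦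
    hG.isAcyclic.eq_penultimate_of_adj_end hq hadj
      (hG.isAcyclic.mem_support_of_adj_of_dist_lt hq hadj.symm hlt)⟩
  have := Walk.length_dropLast_add_one hq_nil
  have := dist_le q.dropLast
  omega

variable [Fintype V] [DecidableRel G.Adj] [DecidableEq V]

theorem IsTree.card_filter_neighborFinset_dist_lt (hG : G.IsTree) (r v : V) :
    #{u ∈ G.neighborFinset v | G.dist r u < G.dist r v} = if v = r then 0 else 1 := by
  split_ifs with hv
  · simp [hv]
  · obtain ⟨u, hu, huniq⟩ := hG.existsUnique_adj_dist_lt hv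
    rw [card_eq_one]
    exact ⟨u, eq_singleton_iff_unique_mem.2 ⟨by simpa using hu, by simpa using huniq⟩⟩

theorem IsTree.card_filter_neighborFinset_lt_dist_add (hG : G.IsTree) (r v : V) :
    #{u ∈ G.neighborFinset v | G.dist r v < G.dist r u} + (if v = r then 0 else 1) =
      G.degree v := by
  rw [← hG.card_filter_neighborFinset_dist_lt r v, ← card_neighborFinset_eq_degree,
    ← card_filter_add_card_filter_not (s := G.neighborFinset v) (G.dist r v < G.dist r ·)]
  congr 2
  refine filter_congr fun u hu ↦ ?_
  have := hG.dist_ne_of_adj r ((mem_neighborFinset _ _ _).1 hu)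
  omega

end SimpleGraph

theorem card_filter_fst_eq_of_card_le_sum {ι κ : Type*} [Fintype ι] [DecidableEq ι]
    (E : Finset (ι × κ)) (c : ι → ℕ) (hc : ∀ i, c i ≤ #{e ∈ E | e.1 = i})
    (hE : #E ≤ ∑ i, c i) (i : ι) : #{e ∈ E | e.1 = i} = c i := by
  have hfib :=
    card_eq_sum_card_fiberwise (f := Prod.fst) (s := E) (t := univ) fun _ _ ↦ mem_univ _
  refine ((sum_eq_sum_iff_of_le fun i _ ↦ hc i).1 ?_ i (mem_univ i)).symm
  exact le_antisymm (sum_le_sum fun i _ ↦ hc i) (hfib ▸ hE)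

section biGraph

variable {T B : Type} {E : Finset (T × B)}

@[simp]
theorem biGraph_adj_inl_inr {t : T} {b : B} :
    (biGraph E).Adj (.inl t) (.inr b) ↔ (t, b) ∈ E := by
  simp [biGraph]

@[simp]
theorem biGraph_adj_inr_inl {t : T} {b : B} :
    (biGraph E).Adj (.inr b) (.inl t) ↔ (t, b) ∈ E := by
  simp [biGraph]

@[simp]
theorem not_biGraph_adj_inl_inl {t t' : T} : ¬ (biGraph E).Adj (.inl t) (.inl t') := by
  simp [biGraph]

@[simp]
theorem not_biGraph_adj_inr_inr {b b' : B} : ¬ (biGraph E).Adj (.inr b) (.inr b') := by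
  simp [biGraph]

variable [Fintype T] [Fintype B]

section neighborFinset

variable [DecidableRel (biGraph E).Adj]

theorem card_filter_fst_eq_card_filter_neighborFinset [DecidableEq T] (t : T)
    (q : T ⊕ B → Prop) [DecidablePred q] :
    #{e ∈ E | e.1 = t ∧ q (.inr e.2)} = #{u ∈ (biGraph E).neighborFinset (.inl t) | q u} := by
  refine card_bij (fun e _ ↦ .inr e.2) ?_ ?_ ?_
  · rintro ⟨t', b⟩ he
    obtain ⟨hmem, rfl, hq⟩ := mem_filter.1 he
    simp [hmem, hq]
  · rintro ⟨t₁, b₁⟩ h₁ ⟨t₂, b₂⟩ h₂ h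
    simp_all
  · rintro (t' | b) hu
    · simp at hu
    · exact ⟨(t, b), by simpa using hu, rfl⟩

theorem card_filter_snd_eq_card_filter_neighborFinset [DecidableEq B] (b : B)
    (q : T ⊕ B → Prop) [DecidablePred q] :
    #{e ∈ E | e.2 = b ∧ q (.inl e.1)} = #{u ∈ (biGraph E).neighborFinset (.inr b) | q u} := by
  refine card_bij (fun e _ ↦ .inl e.1) ?_ ?_ ?_
  · rintro ⟨t, b'⟩ he
    obtain ⟨hmem, rfl, hq⟩ := mem_filter.1 he
    simp [hmem, hq]
  · rintro ⟨t₁, b₁⟩ h₁ ⟨t₂, b₂⟩ h₂ h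
    simp_all
  · rintro (t | b') hu
    · exact ⟨(t, b), by simpa using hu, rfl⟩
    · simp at hu

theorem biGraph_degree_inl [DecidableEq T] (t : T) :
    (biGraph E).degree (.inl t) = #{e ∈ E | e.1 = t} := by
  simpa using (card_filter_fst_eq_card_filter_neighborFinset (E := E) t fun _ ↦ True).symm

theorem biGraph_degree_inr [DecidableEq B] (b : B) :
    (biGraph E).degree (.inr b) = #{e ∈ E | e.2 = b} := by
  simpa using (card_filter_snd_eq_card_filter_neighborFinset (E := E) b fun _ ↦ True).symm

theorem card_edgeFinset_biGraph [DecidableEq T] [DecidableEq B] :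
    #(biGraph E).edgeFinset = #E := by
  have := (biGraph E).sum_degrees_eq_twice_card_edges
  simp only [Fintype.sum_sum_type, biGraph_degree_inl, biGraph_degree_inr] at this
  rw [← card_eq_sum_card_fiberwise (fun _ _ ↦ mem_univ _),
    ← card_eq_sum_card_fiberwise (fun _ _ ↦ mem_univ _)] at this
  omega

end neighborFinset

variable [DecidableEq T] [DecidableEq B]

theorem isTree_biGraph_and_card_filter_fst_eq (hE : (biGraph E).IsAcyclic) (c : T → ℕ)
    (hc : ∀ t, c t ≤ #{e ∈ E | e.1 = t})
    (hcard : ∑ t, c t + 1 = Fintype.card T + Fintype.card B) :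
    (biGraph E).IsTree ∧ ∀ t, #{e ∈ E | e.1 = t} = c t := by
  classical
  have : Nonempty (T ⊕ B) := Fintype.card_pos_iff.1 (by rw [Fintype.card_sum]; omega)
  have hforest := hE.card_edgeFinset_add_one_le
  rw [card_edgeFinset_biGraph, Fintype.card_sum] at hforest
  have hdeg := card_filter_fst_eq_of_card_le_sum E c hc (by omega)
  refine ⟨hE.isTree_of_card_le ?_, hdeg⟩
  rw [card_edgeFinset_biGraph, card_eq_sum_card_fiberwise (f := Prod.fst) (t := univ)
    fun _ _ ↦ mem_univ _, Fintype.card_sum, ← hcard]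
  simp [hdeg]

/-- Every bead is given to its parent in the tree rooted at the thief `t₀`. -/
noncomputable def parentAssignment (E : Finset (T × B)) (t₀ : T) : Finset (T × B) :=
  {e ∈ E | (biGraph E).dist (.inl t₀) (.inl e.1) < (biGraph E).dist (.inl t₀) (.inr e.2)}

theorem card_filter_snd_parentAssignment (hE : (biGraph E).IsTree) (t₀ : T) (b : B) :
    #{e ∈ parentAssignment E t₀ | e.2 = b} = 1 := by
  classical
  set d := (biGraph E).dist (.inl t₀)
  calc _ = #{e ∈ E | e.2 = b ∧ d (.inl e.1) < d (.inr b)} := by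
        congr 1; ext ⟨t, b'⟩; simp only [parentAssignment, mem_filter]; grind
    _ = 1 := by
        rw [card_filter_snd_eq_card_filter_neighborFinset b (d · < d (.inr b)),
          hE.card_filter_neighborFinset_dist_lt]
        simp

theorem card_filter_fst_parentAssignment_add (hE : (biGraph E).IsTree) (t₀ t : T) :
    #{e ∈ parentAssignment E t₀ | e.1 = t} + (if t = t₀ then 0 else 1) =
      #{e ∈ E | e.1 = t} := by
  classical
  set d := (biGraph E).dist (.inl t₀)
  calc _ = #{e ∈ E | e.1 = t ∧ d (.inl t) < d (.inr e.2)} + (if t = t₀ then 0 else 1) := by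
        congr 2; ext ⟨t', b⟩; simp only [parentAssignment, mem_filter]; grind
    _ = _ := by
        rw [card_filter_fst_eq_card_filter_neighborFinset t (d (.inl t) < d ·),
          ← biGraph_degree_inl, ← hE.card_filter_neighborFinset_lt_dist_add (.inl t₀)]
        simp [d]

end biGraph

theorem round_r_one_general {T B : Type} [Fintype T] [Fintype B] [DecidableEq T] [DecidableEq B]
    (E : Finset (T × B)) (hacyclic : (biGraph E).IsAcyclic)
    (α : T → ℕ)
    (hthief : ∀ t : T, α t + 1 ≤ (E.filter (fun e => e.1 = t)).card)
    (hsum : (∑ t : T, α t) + 1 = Fintype.card B)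
    (t₀ : T) :
    ∃ F ⊆ E,
      (∀ b : B, (F.filter (fun e => e.2 = b)).card = 1) ∧
      (F.filter (fun e => e.1 = t₀)).card = α t₀ + 1 ∧
      (∀ t : T, t ≠ t₀ → (F.filter (fun e => e.1 = t)).card = α t) := by
  obtain ⟨htree, hdeg⟩ := isTree_biGraph_and_card_filter_fst_eq hacyclic (α · + 1) hthief
    (by simp only [sum_add_distrib, sum_const, card_univ, smul_eq_mul, mul_one]; omega)
  refine ⟨parentAssignment E t₀, filter_subset _ _, card_filter_snd_parentAssignment htree t₀,
    ?_, fun t ht ↦ ?_⟩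
  · simpa [hdeg] using card_filter_fst_parentAssignment_add htree t₀ t₀
  · simpa [hdeg, ht] using card_filter_fst_parentAssignment_add htree t₀ t

/-- Rounding lemma for the case `r_j = 1`: in an acyclic bipartite graph of
thieves `T` and beads `B` where each bead has degree at least `2`, each thief
`t` has degree at least `α t + 1`, and `∑ α t + 1 = |B|`, for any distinguished
thief `t₀` there is a set of edges `F` assigning each bead to exactly one
thief so that `t₀` gets `α t₀ + 1` beads and every other thief `t` gets `α t`
beads. -/
theorem round_r_one {T B : Type} [Fintype T] [Fintype B] [DecidableEq T] [DecidableEq B]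
    (E : Finset (T × B)) (hacyclic : (biGraph E).IsAcyclic)
    (α : T → ℕ)
    (hbead : ∀ b : B, 2 ≤ (E.filter (fun e => e.2 = b)).card)
    (hthief : ∀ t : T, α t + 1 ≤ (E.filter (fun e => e.1 = t)).card)
    (hsum : (∑ t : T, α t) + 1 = Fintype.card B)
    (t₀ : T) :
    ∃ F ⊆ E,
      (∀ b : B, (F.filter (fun e => e.2 = b)).card = 1) ∧
      (F.filter (fun e => e.1 = t₀)).card = α t₀ + 1 ∧
      (∀ t : T, t ≠ t₀ → (F.filter (fun e => e.1 = t)).card = α t) :=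
  round_r_one_general E hacyclic α hthief hsum t₀
end

section
/- Let G be a bipartite graph without cycles with parts [q] (thieves) and B (beads) such that every bead-vertex has degree at least 2, and suppose each thief t receives total fractional amount exactly (q-1)/q (i.e., Σ_{e ∈ δ(t)} u_e = (q-1)/q with all u_e ∈ (0,1) and Σ_{e ∈ δ(k)} u_e = 1 for each bead k). Then |B| = q - 1, and for every choice of q-1 thieves there is a perfect matching of B into those thieves (each chosen thief receiving exactly one bead). -/
open Finset

section FractionalBipartite

variable {T B : Type*} (E : Finset (T × B)) (u : T × B → ℚ) {c : ℚ}

lemma sum_filter_snd_mem_eq_card [DecidableEq B]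
    (hright : ∀ b : B, ∑ e ∈ E.filter (fun e => e.2 = b), u e = 1) (S : Finset B) :
    ∑ e ∈ E.filter (fun e => e.2 ∈ S), u e = S.card := by
  rw [← sum_fiberwise_eq_sum_filter, sum_congr rfl fun b _ => hright b]
  simp

lemma sum_filter_fst_mem_eq_card_mul [DecidableEq T]
    (hleft : ∀ t : T, ∑ e ∈ E.filter (fun e => e.1 = t), u e = c) (N : Finset T) :
    ∑ e ∈ E.filter (fun e => e.1 ∈ N), u e = N.card * c := by
  rw [← sum_fiberwise_eq_sum_filter, sum_congr rfl fun t _ => hleft t]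
  simp

variable [DecidableEq T] [DecidableEq B]

def leftNeighbors (S : Finset B) : Finset T :=
  (E.filter (fun e => e.2 ∈ S)).image Prod.fst

variable {E} in
lemma mem_leftNeighbors {S : Finset B} {t : T} :
    t ∈ leftNeighbors E S ↔ ∃ b ∈ S, (t, b) ∈ E := by
  simp only [leftNeighbors, mem_image, mem_filter, Prod.exists]
  aesop

lemma biUnion_leftNeighbors_singleton_inter (S : Finset B) (T' : Finset T) :
    S.biUnion (fun b => leftNeighbors E {b} ∩ T') = leftNeighbors E S ∩ T' := by
  ext t
  simp only [mem_biUnion, mem_inter, mem_leftNeighbors, mem_singleton, exists_eq_left]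
  tauto

lemma card_le_card_leftNeighbors_mul (hu : ∀ e ∈ E, 0 ≤ u e)
    (hright : ∀ b : B, ∑ e ∈ E.filter (fun e => e.2 = b), u e = 1)
    (hleft : ∀ t : T, ∑ e ∈ E.filter (fun e => e.1 = t), u e = c) (S : Finset B) :
    (S.card : ℚ) ≤ (leftNeighbors E S).card * c := calc
  (S.card : ℚ) = ∑ e ∈ E.filter (fun e => e.2 ∈ S), u e :=
    (sum_filter_snd_mem_eq_card E u hright S).symm
  _ ≤ ∑ e ∈ E.filter (fun e => e.1 ∈ leftNeighbors E S), u e := by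
    refine sum_le_sum_of_subset_of_nonneg ?_ fun e he _ => hu e (mem_filter.1 he).1
    intro e he
    obtain ⟨heE, heS⟩ := mem_filter.1 he
    exact mem_filter.2 ⟨heE, mem_leftNeighbors.2 ⟨e.2, heS, heE⟩⟩
  _ = (leftNeighbors E S).card * c := sum_filter_fst_mem_eq_card_mul E u hleft _

lemma card_lt_card_leftNeighbors (hc : c < 1) (hu : ∀ e ∈ E, 0 ≤ u e)
    (hright : ∀ b : B, ∑ e ∈ E.filter (fun e => e.2 = b), u e = 1)
    (hleft : ∀ t : T, ∑ e ∈ E.filter (fun e => e.1 = t), u e = c)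
    {S : Finset B} (hS : S.Nonempty) :
    S.card < (leftNeighbors E S).card := by
  have hle := card_le_card_leftNeighbors_mul E u hu hright hleft S
  have hSpos : (0 : ℚ) < S.card := by exact_mod_cast hS.card_pos
  have hNpos : (0 : ℚ) < (leftNeighbors E S).card := by
    refine (Nat.cast_nonneg _).lt_of_ne fun hN => ?_
    rw [← hN, zero_mul] at hle
    linarith
  exact_mod_cast hle.trans_lt (mul_lt_of_lt_one_right hNpos hc)

theorem card_eq_card_mul_of_sum_eq [Fintype T] [Fintype B]
    (hright : ∀ b : B, ∑ e ∈ E.filter (fun e => e.2 = b), u e = 1)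
    (hleft : ∀ t : T, ∑ e ∈ E.filter (fun e => e.1 = t), u e = c) :
    (Fintype.card B : ℚ) = Fintype.card T * c := by
  have hB := sum_filter_snd_mem_eq_card E u hright univ
  have hT := sum_filter_fst_mem_eq_card_mul E u hleft univ
  simp only [mem_univ, filter_true, card_univ] at hB hT
  rw [← hB, hT]

theorem exists_injective_of_card_lt_card_leftNeighbors [Fintype T] (T' : Finset T)
    (hT' : T'ᶜ.card ≤ 1)
    (hHall : ∀ S : Finset B, S.Nonempty → S.card < (leftNeighbors E S).card) :
    ∃ f : B → T, Function.Injective f ∧ ∀ b, f b ∈ T' ∧ (f b, b) ∈ E := by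
  have hall : ∀ S : Finset B, S.card ≤ (S.biUnion fun b => leftNeighbors E {b} ∩ T').card := by
    intro S
    rw [biUnion_leftNeighbors_singleton_inter]
    rcases S.eq_empty_or_nonempty with rfl | hS
    · simp
    have hsdiff : (leftNeighbors E S \ T').card ≤ 1 :=
      (card_le_card fun t ht => mem_compl.2 (mem_sdiff.1 ht).2).trans hT'
    have := card_inter_add_card_sdiff (leftNeighbors E S) T'
    have := hHall S hS
    omega
  obtain ⟨f, hinj, hf⟩ := (all_card_le_biUnion_card_iff_exists_injective _).1 hall
  refine ⟨f, hinj, fun b => ?_⟩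
  obtain ⟨hfN, hfT'⟩ := mem_inter.1 (hf b)
  obtain ⟨b', hb', hE⟩ := mem_leftNeighbors.1 hfN
  rw [mem_singleton.1 hb'] at hE
  exact ⟨hfT', hE⟩

end FractionalBipartite

lemma natCast_mul_sub_one_div_self (q : ℕ) : (q : ℚ) * ((q - 1) / q) = ((q - 1 : ℕ) : ℚ) := by
  rcases q.eq_zero_or_pos with rfl | hq
  · simp
  · rw [mul_div_cancel₀ _ (by positivity), Nat.cast_sub hq, Nat.cast_one]

lemma sub_one_div_natCast_lt_one (q : ℕ) : ((q : ℚ) - 1) / q < 1 := by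
  rcases q.eq_zero_or_pos with rfl | hq
  · simp
  · rw [div_lt_one (by positivity)]
    linarith

theorem round_r_qsub1_general {B : Type} [Fintype B] [DecidableEq B] (q : ℕ)
    (E : Finset (Fin q × B))
    (u : Fin q × B → ℚ)
    (hu : ∀ e ∈ E, 0 < u e ∧ u e < 1)
    (hbead_sum : ∀ b : B, ∑ e ∈ E.filter (fun e => e.2 = b), u e = 1)
    (hthief_sum : ∀ t : Fin q, ∑ e ∈ E.filter (fun e => e.1 = t), u e = ((q : ℚ) - 1) / q) :
    Fintype.card B = q - 1 ∧
    ∀ T : Finset (Fin q), T.card = q - 1 →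
      ∃ f : B → Fin q, Function.Injective f ∧ ∀ b : B, f b ∈ T ∧ (f b, b) ∈ E := by
  have hu₀ : ∀ e ∈ E, 0 ≤ u e := fun e he => (hu e he).1.le
  refine ⟨?_, fun T hT => ?_⟩
  · have h := card_eq_card_mul_of_sum_eq E u hbead_sum hthief_sum
    rw [Fintype.card_fin, natCast_mul_sub_one_div_self] at h
    exact_mod_cast h
  · refine exists_injective_of_card_lt_card_leftNeighbors E T ?_ fun S hS =>
      card_lt_card_leftNeighbors E u (sub_one_div_natCast_lt_one q) hu₀ hbead_sum hthief_sum hS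
    rw [card_compl, Fintype.card_fin, hT]
    omega

/-- Rounding lemma for the case `r_j = q - 1`: in an acyclic bipartite graph of
`q` thieves and beads `B`, with positive fractional weights `u` on the edges
summing to `1` at each bead and to `(q-1)/q` at each thief, where each bead has
degree at least `2`, one has `|B| = q - 1`, and the beads can be matched
bijectively to any prescribed set of `q - 1` thieves along edges of the graph. -/
theorem round_r_qsub1 {B : Type} [Fintype B] [DecidableEq B] (q : ℕ) (hq : 0 < q)
    (E : Finset (Fin q × B)) (hacyclic : (biGraph E).IsAcyclic)
    (u : Fin q × B → ℚ)
    (hu : ∀ e ∈ E, 0 < u e ∧ u e < 1)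
    (hbead : ∀ b : B, 2 ≤ (E.filter (fun e => e.2 = b)).card)
    (hbead_sum : ∀ b : B, ∑ e ∈ E.filter (fun e => e.2 = b), u e = 1)
    (hthief_sum : ∀ t : Fin q, ∑ e ∈ E.filter (fun e => e.1 = t), u e = ((q : ℚ) - 1) / q) :
    Fintype.card B = q - 1 ∧
    ∀ T : Finset (Fin q), T.card = q - 1 →
      ∃ f : B → Fin q, Function.Injective f ∧ ∀ b : B, f b ∈ T ∧ (f b, b) ∈ E :=
  round_r_qsub1_general q E u hu hbead_sum hthief_sum
end
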